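/- Let G be a finite group, N ⊴ G, and Z ≤ Z(G) a central subgroup with Z ∩ N = {1}. Then for every irreducible character λ of ZN/N ≅ Z, inflation from G/N to G defines a bijection between the set Irr(G/N | λ) of irreducible characters of G/N lying over λ (viewing λ as a character of ZN/N) and the set Irr(G | Inf(λ)) of irreducible characters of G lying over the inflation of λ to ZN. -/

import Mathlib

open scoped Classical

/-- `χ : G → ℂ` is an irreducible (complex) character of `G`:
the character of a simple finite-dimensional complex representation. -/
def IsIrrChar (G : Type) [Group G] (χ : G → ℂ) : Prop :=
  ∃ V : FDRep ℂ G, CategoryTheory.Simple V ∧ χ = V.character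

/-- The usual inner product of class functions on a finite group `H`. -/
noncomputable def charInner (H : Type*) [Finite H] (φ ψ : H → ℂ) : ℂ :=
  letI := Fintype.ofFinite H
  (Fintype.card H : ℂ)⁻¹ * ∑ h : H, φ h * (starRingEnd ℂ) (ψ h)

/-!
Inflation along `G → G/N` does not change character values, and the irreducibility criterion
`∑ g, χ g * χ g⁻¹ = |G|` is insensitive to pulling back along a surjection (every fibre has the
same size), so inflation maps `Irr(G/N)` into `Irr(G)`, injectively. For surjectivity, let
`χ ∈ Irr(G)` afford `ρ` with `⟨χ, μ⟩ ≠ 0` on `ZN`. Since `N` is normal, Schur's lemma makes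
`S = ∑_{n ∈ N} ρ n` a scalar `c`, and `ρ m * S = S` for `m ∈ N`. If `c = 0`, then averaging over
`N`-translates, on which `μ` is constant, gives `|N| ⟨χ, μ⟩ = ∑_x tr (ρ x * S) conj (μ x) = 0`.
So `c ≠ 0`, `N` acts trivially, and `ρ` descends to `G/N`.
-/

open CategoryTheory Finset

theorem MonoidHom.sum_comp_of_surjective {G H M : Type*} [Group G] [Fintype G] [Group H]
    [Fintype H] [DecidableEq H] [AddCommMonoid M] {f : G →* H} (hf : Function.Surjective f)
    (φ : H → M) : ∑ g, φ (f g) = #{g | f g = 1} • ∑ h, φ h := by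
  rw [sum_comp, image_univ_of_surjective hf, smul_sum]
  exact sum_congr rfl fun h _ => by rw [card_fiber_eq_of_mem_range f (hf h) (hf 1)]

namespace FDRep

universe u

variable {k G : Type u} [Field k] [Group G]

theorem simple_iff_of_character_eq_comp [IsAlgClosed k] [CharZero k] [Fintype G] {H : Type u}
    [Group H] [Fintype H] {f : G →* H} (hf : Function.Surjective f) {V : FDRep k G}
    {W : FDRep k H} (hVW : ∀ g, V.character g = W.character (f g)) : Simple V ↔ Simple W := by
  rw [simple_iff_char_is_norm_one, simple_iff_char_is_norm_one]
  have hsum : ∑ g, V.character g * V.character g⁻¹ =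
      #{g | f g = 1} • ∑ h, W.character h * W.character h⁻¹ := by
    simp_rw [hVW, map_inv]
    exact f.sum_comp_of_surjective hf fun h => W.character h * W.character h⁻¹
  have hcard : (Nat.card G : k) = #{g | f g = 1} • (Nat.card H : k) := by
    simpa using f.sum_comp_of_surjective hf fun _ => (1 : k)
  have hfiber : #{g | f g = 1} ≠ 0 := card_ne_zero.mpr ⟨1, by simp⟩
  rw [hsum, hcard, nsmul_eq_mul, nsmul_eq_mul, mul_right_inj' (Nat.cast_ne_zero.mpr hfiber)]

theorem exists_eq_smul_one_of_commute [IsAlgClosed k] (V : FDRep k G) [Simple V]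
    (T : V →ₗ[k] V) (hT : ∀ g, Commute (V.ρ g) T) : ∃ c : k, T = c • 1 := by
  obtain ⟨c, hc⟩ := endomorphism_simple_eq_smul_id k (X := V)
    (Action.Hom.mk (FGModuleCat.ofHom T) fun g => by
      ext x; exact (LinearMap.congr_fun (hT g) x).symm)
  exact ⟨c, (congrArg (fun φ => φ.hom.hom.hom) hc).symm⟩

theorem sum_ρ_eq_zero_or_le_ker [IsAlgClosed k] (V : FDRep k G) [Simple V] (N : Subgroup G)
    [N.Normal] [Fintype N] : ∑ n : N, V.ρ n = 0 ∨ N ≤ V.ρ.ker := by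
  set S := ∑ n : N, V.ρ n
  have hcomm : ∀ g, Commute (V.ρ g) S := fun g => by
    simp only [Commute, SemiconjBy, S, mul_sum, sum_mul, ← map_mul]
    exact Fintype.sum_equiv (MulAut.conjNormal g).toEquiv _ _ fun n => by
      simp [MulAut.conjNormal_apply]
  have habsorb : ∀ m ∈ N, V.ρ m * S = S := fun m hm => by
    simp only [S, mul_sum, ← map_mul]
    exact Fintype.sum_equiv (Equiv.mulLeft ⟨m, hm⟩) _ _ fun n => rfl
  obtain ⟨c, hc⟩ := V.exists_eq_smul_one_of_commute S hcomm
  rcases eq_or_ne c 0 with rfl | hc0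
  · exact Or.inl (by rw [hc, zero_smul])
  · refine Or.inr fun m hm => ?_
    have h := habsorb m hm
    rw [hc, mul_smul_comm, mul_one] at h
    exact smul_right_injective _ hc0 h

theorem sum_character_mul_eq_zero_of_sum_ρ_eq_zero [CharZero k] (V : FDRep k G)
    {N K : Subgroup G} [Fintype N] [Fintype K] (hNK : N ≤ K) (μ : K → k)
    (hμ : ∀ (x : K) (n : G) (hn : n ∈ N), μ (x * ⟨n, hNK hn⟩) = μ x)
    (hS : ∑ n : N, V.ρ n = 0) : ∑ x : K, V.character x * μ x = 0 := by
  have htrace : ∀ x : K, ∑ n : N, V.character (x * n) = 0 := fun x => by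
    have : ∑ n : N, V.character (x * n) = LinearMap.trace k V (V.ρ x * ∑ n : N, V.ρ n) := by
      simp [mul_sum, map_sum, FDRep.character]
    rw [this, hS, mul_zero, map_zero]
  have hshift : ∀ n : N, ∑ x : K, V.character x * μ x = ∑ x : K, V.character (x * n) * μ x :=
    fun n => (Fintype.sum_equiv (Equiv.mulRight ⟨n, hNK n.2⟩) _ _ fun x => by simp [hμ]).symm
  have hcard : (Fintype.card N : k) * ∑ x : K, V.character x * μ x = 0 := calc
    _ = ∑ n : N, ∑ x : K, V.character (x * n) * μ x := by
      rw [← nsmul_eq_mul, ← card_univ, ← sum_const]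
      exact sum_congr rfl fun n _ => hshift n
    _ = ∑ x : K, (∑ n : N, V.character (x * n)) * μ x := by
      rw [sum_comm]; simp_rw [sum_mul]
    _ = 0 := by simp [htrace]
  exact (mul_eq_zero.mp hcard).resolve_left (Nat.cast_ne_zero.mpr Fintype.card_ne_zero)

end FDRep

theorem stmt_13_general (G : Type) [Group G] [Finite G] (N Z : Subgroup G) [N.Normal]
    (μ : ↥(Z ⊔ N) → ℂ)
    (hμN : ∀ (g : ↥(Z ⊔ N)) (n : G) (hn : n ∈ N),
      μ (g * ⟨n, Subgroup.mem_sup_right hn⟩) = μ g) :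
    Set.BijOn (fun χ : (G ⧸ N) → ℂ => χ ∘ (QuotientGroup.mk' N))
      {χ : (G ⧸ N) → ℂ | IsIrrChar (G ⧸ N) χ ∧
        charInner ↥(Z ⊔ N) (fun x => χ (QuotientGroup.mk' N ↑x)) μ ≠ 0}
      {χ : G → ℂ | IsIrrChar G χ ∧
        charInner ↥(Z ⊔ N) (fun x => χ ↑x) μ ≠ 0} := by
  have hπ := QuotientGroup.mk'_surjective N
  let := Fintype.ofFinite G
  let := Fintype.ofFinite (G ⧸ N)
  refine ⟨?_, hπ.injective_comp_right.injOn, ?_⟩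
  · rintro χ ⟨⟨V, hV, rfl⟩, hinner⟩
    exact ⟨⟨(Action.res _ (QuotientGroup.mk' N)).obj V,
      (FDRep.simple_iff_of_character_eq_comp hπ fun _ => rfl).mpr hV, rfl⟩, hinner⟩
  · rintro χ ⟨⟨V, hV, rfl⟩, hinner⟩
    have hN : N ≤ V.ρ.ker := by
      let := Fintype.ofFinite N
      let := Fintype.ofFinite ↥(Z ⊔ N)
      refine (V.sum_ρ_eq_zero_or_le_ker N).resolve_left fun hS => hinner ?_
      rw [charInner, V.sum_character_mul_eq_zero_of_sum_ρ_eq_zero le_sup_right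
        (fun x => starRingEnd ℂ (μ x)) (fun x n hn => congrArg _ (hμN x n hn)) hS, mul_zero]
    let W := FDRep.of (QuotientGroup.lift N V.ρ hN)
    exact ⟨W.character, ⟨⟨W, (FDRep.simple_iff_of_character_eq_comp hπ fun _ => rfl).mp hV, rfl⟩,
      hinner⟩, rfl⟩

/-- for `N ⊴ G`, `Z ≤ Z(G)` with `Z ∩ N = 1`, and `λ` an irreducible
character of `ZN/N ≅ Z`, inflation along `G/N → G` is a bijection from
`Irr(G/N ∣ λ)` onto `Irr(G ∣ Inf_Z^{ZN} λ)`. Here `μ : ZN → ℂ` is the inflation of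
`λ` to `ZN` (the function agreeing with `λ` on `Z` and constant on `N`-cosets), and
lying over `λ` (resp. over `μ`) is expressed by a nonzero inner product with `μ`
over `ZN`, which for a character of `G/N` agrees with the inner product with `λ`
over `ZN/N`. -/
theorem stmt_13 (G : Type) [Group G] [Finite G] (N Z : Subgroup G) [N.Normal]
    (hZ : Z ≤ Subgroup.center G) (hZN : Z ⊓ N = ⊥)
    (lam : ↥Z → ℂ) (hlam : IsIrrChar ↥Z lam)
    (μ : ↥(Z ⊔ N) → ℂ)
    (hμZ : ∀ z : G, ∀ hz : z ∈ Z, μ ⟨z, Subgroup.mem_sup_left hz⟩ = lam ⟨z, hz⟩)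
    (hμN : ∀ (g : ↥(Z ⊔ N)) (n : G) (hn : n ∈ N),
      μ (g * ⟨n, Subgroup.mem_sup_right hn⟩) = μ g) :
    Set.BijOn (fun χ : (G ⧸ N) → ℂ => χ ∘ (QuotientGroup.mk' N))
      {χ : (G ⧸ N) → ℂ | IsIrrChar (G ⧸ N) χ ∧
        charInner ↥(Z ⊔ N) (fun x => χ (QuotientGroup.mk' N ↑x)) μ ≠ 0}
      {χ : G → ℂ | IsIrrChar G χ ∧
        charInner ↥(Z ⊔ N) (fun x => χ ↑x) μ ≠ 0} :=
  stmt_13_general G N Z μ hμN
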